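/- arXiv:2603.00216 — 4 statements merged into one kernel-verified Lean document; each statement's English description precedes it below -/
import Mathlib

section
/- For all z ≥ 0, z(2+z²)Φ(z)(1-Φ(z)) ≥ (1+z²)(2Φ(z)-1)φ(z), where Φ and φ are the standard normal CDF and PDF. -/
/-!
For `z ≥ 1` we use the Mills-ratio bound `(z³ + 5z) φ(z) ≤ (z⁴ + 6z² + 3) (1 - Φ(z))`: the derivative
of `(z³ + 5z) / (z⁴ + 6z² + 3) · φ` is `-(1 - 24 / (z⁴ + 6z² + 3)²) φ ≥ -φ`, so it suffices to
integrate over `(z, ∞)`. With `q = 1 - Φ(z) ≤ 1/2` the claim reads `f(q) ≥ 0` for a quadratic `f`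
that increases on `[0, 1/2]`, so `q` may be replaced by this lower bound; what is left is a polynomial
inequality once `φ(z)` is bounded below through `e^{-x} ≥ (1 - x/2)²` and `π ≤ 4`.

For `z ≤ 1` we write `Φ(z) = 1/2 + J` and bound both `φ(z)` and `J = ∫₀^z φ` above through
`e^{-x} ≤ 1 - x + x²/2`; with `π ≥ 3` the claim becomes a polynomial inequality in `z²` on `[0, 1]`.
-/

open Real Set Filter Topology

noncomputable def phi (y : ℝ) : ℝ := (Real.sqrt (2 * Real.pi))⁻¹ * Real.exp (-y ^ 2 / 2)

noncomputable def Phi (x : ℝ) : ℝ := ∫ y in Set.Iic x, phi y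

noncomputable def PhiInv (a : ℝ) : ℝ := Function.invFun Phi a

open MeasureTheory ProbabilityTheory

lemma phi_eq_gaussianPDFReal : phi = gaussianPDFReal 0 1 := by
  ext y
  simp [phi, gaussianPDFReal]

lemma phi_pos (y : ℝ) : 0 < phi y := by
  rw [phi]; positivity

lemma phi_neg (y : ℝ) : phi (-y) = phi y := by
  simp [phi]

lemma continuous_phi : Continuous phi := by
  unfold phi; fun_prop

lemma integrable_phi : Integrable phi := by
  rw [phi_eq_gaussianPDFReal]; exact integrable_gaussianPDFReal 0 1

lemma integral_phi : ∫ y, phi y = 1 := by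
  rw [phi_eq_gaussianPDFReal]; exact integral_gaussianPDFReal_eq_one 0 one_ne_zero

lemma one_sub_Phi_eq_integral_Ioi (z : ℝ) : 1 - Phi z = ∫ y in Ioi z, phi y := by
  have := intervalIntegral.integral_Iic_add_Ioi (b := z)
    integrable_phi.integrableOn integrable_phi.integrableOn
  rw [integral_phi] at this
  rw [Phi]; linarith

lemma Phi_zero : Phi 0 = 1 / 2 := by
  have h := integral_comp_neg_Iic 0 phi
  simp only [phi_neg, neg_zero] at h
  have := one_sub_Phi_eq_integral_Ioi 0
  rw [Phi] at *
  linarith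

lemma Phi_eq_half_add_integral (z : ℝ) : Phi z = 1 / 2 + ∫ t in (0 : ℝ)..z, phi t := by
  have := intervalIntegral.integral_Iic_sub_Iic (μ := volume) (a := 0) (b := z)
    integrable_phi.integrableOn integrable_phi.integrableOn
  rw [← Phi, ← Phi, Phi_zero] at this
  linarith

lemma half_le_Phi {z : ℝ} (hz : 0 ≤ z) : 1 / 2 ≤ Phi z := by
  rw [Phi_eq_half_add_integral]
  exact le_add_of_nonneg_right (intervalIntegral.integral_nonneg hz fun t _ => (phi_pos t).le)

lemma hasDerivAt_phi (t : ℝ) : HasDerivAt phi (-t * phi t) t := by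
  have h : HasDerivAt (fun y : ℝ => -y ^ 2 / 2) (-t) t :=
    ((hasDerivAt_pow 2 t).neg.div_const 2).congr_deriv (by norm_num; ring)
  have h' := (h.exp).const_mul (√(2 * π))⁻¹
  rwa [show (√(2 * π))⁻¹ * (rexp (-t ^ 2 / 2) * -t) = -t * phi t by rw [phi]; ring] at h'

lemma tendsto_phi_atTop : Tendsto phi atTop (𝓝 0) := by
  have h : Tendsto (fun t : ℝ => -t ^ 2 / 2) atTop atBot :=
    (tendsto_neg_atTop_atBot.comp (tendsto_pow_atTop two_ne_zero)).atBot_div_const two_pos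
  have h' := (tendsto_exp_atBot.comp h).const_mul (√(2 * π))⁻¹
  rw [mul_zero] at h'
  exact h'

lemma hasDerivAt_div_mul_phi (t : ℝ) :
    HasDerivAt (fun t => (t ^ 3 + 5 * t) / (t ^ 4 + 6 * t ^ 2 + 3) * phi t)
      (-((1 - 24 / (t ^ 4 + 6 * t ^ 2 + 3) ^ 2) * phi t)) t := by
  have hN : HasDerivAt (fun t : ℝ => t ^ 3 + 5 * t) (3 * t ^ 2 + 5) t :=
    ((hasDerivAt_pow 3 t).add ((hasDerivAt_id t).const_mul 5)).congr_deriv (by norm_num)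
  have hD : HasDerivAt (fun t : ℝ => t ^ 4 + 6 * t ^ 2 + 3) (4 * t ^ 3 + 12 * t) t :=
    (((hasDerivAt_pow 4 t).add ((hasDerivAt_pow 2 t).const_mul 6)).add_const 3).congr_deriv
      (by norm_num; ring)
  have hD0 : t ^ 4 + 6 * t ^ 2 + 3 ≠ 0 := by positivity
  refine ((hN.div hD hD0).mul (hasDerivAt_phi t)).congr_deriv ?_
  simp only [Pi.div_apply]
  field_simp
  ring

lemma tendsto_div_mul_phi_atTop :
    Tendsto (fun t => (t ^ 3 + 5 * t) / (t ^ 4 + 6 * t ^ 2 + 3) * phi t) atTop (𝓝 0) := by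
  refine tendsto_of_tendsto_of_tendsto_of_le_of_le' tendsto_const_nhds tendsto_phi_atTop ?_ ?_
  · filter_upwards [eventually_ge_atTop 0] with t ht
    have := phi_pos t
    positivity
  · filter_upwards [eventually_ge_atTop 1] with t ht
    have hN : t ^ 3 + 5 * t ≤ t ^ 4 + 6 * t ^ 2 + 3 := by
      nlinarith [mul_nonneg (pow_nonneg (by linarith : (0 : ℝ) ≤ t) 3) (sub_nonneg.2 ht)]
    have : (t ^ 3 + 5 * t) / (t ^ 4 + 6 * t ^ 2 + 3) ≤ 1 := (div_le_one (by positivity)).2 hN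
    simpa using mul_le_mul_of_nonneg_right this (phi_pos t).le

lemma mul_phi_le_mul_one_sub_Phi (z : ℝ) :
    (z ^ 3 + 5 * z) * phi z ≤ (z ^ 4 + 6 * z ^ 2 + 3) * (1 - Phi z) := by
  set D : ℝ → ℝ := fun t => t ^ 4 + 6 * t ^ 2 + 3
  have hD : ∀ t, 3 ≤ D t := fun t => le_add_of_nonneg_left (by positivity)
  set g : ℝ → ℝ := fun t => (1 - 24 / D t ^ 2) * phi t
  have hg_int : Integrable g := by
    have hcont : Continuous fun t => 1 - 24 / D t ^ 2 :=
      continuous_const.sub (continuous_const.div (by fun_prop)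
        fun t => (pow_pos (by linarith [hD t]) 2).ne')
    refine integrable_phi.bdd_mul (c := 3) hcont.aestronglyMeasurable (ae_of_all _ fun t => ?_)
    have h9 : 9 ≤ D t ^ 2 := by nlinarith [hD t]
    have : 24 / D t ^ 2 ≤ 24 / 9 := div_le_div_of_nonneg_left (by norm_num) (by norm_num) h9
    have : 0 ≤ 24 / D t ^ 2 := by positivity
    rw [Real.norm_eq_abs, abs_le]
    constructor <;> linarith
  have hg_eq : ∫ t in Ioi z, g t = (z ^ 3 + 5 * z) / D z * phi z := by
    have := integral_Ioi_of_hasDerivAt_of_tendsto' (a := z) (fun t _ => hasDerivAt_div_mul_phi t)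
      hg_int.neg.integrableOn tendsto_div_mul_phi_atTop
    rw [integral_neg] at this
    linarith
  have hg_le : ∫ t in Ioi z, g t ≤ 1 - Phi z := by
    rw [one_sub_Phi_eq_integral_Ioi]
    refine setIntegral_mono hg_int.integrableOn integrable_phi.integrableOn fun t => ?_
    have := phi_pos t
    have : 0 ≤ 24 / D t ^ 2 := by positivity
    simp only [g]
    nlinarith
  rw [hg_eq, div_mul_eq_mul_div, div_le_iff₀ (by linarith [hD z])] at hg_le
  linarith

lemma Real.exp_neg_le_one_sub_add_sq_div_two {x : ℝ} (hx : 0 ≤ x) :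
    exp (-x) ≤ 1 - x + x ^ 2 / 2 := by
  have hpos : 0 < 1 + x + x ^ 2 / 2 := by positivity
  calc exp (-x) = (exp x)⁻¹ := exp_neg x
    _ ≤ (1 + x + x ^ 2 / 2)⁻¹ := inv_anti₀ hpos (quadratic_le_exp_of_nonneg hx)
    _ ≤ 1 - x + x ^ 2 / 2 := by
      rw [inv_le_iff_one_le_mul₀ hpos]
      nlinarith [pow_nonneg hx 4]

lemma Real.sq_one_sub_half_le_exp_neg {x : ℝ} (hx : x ≤ 2) : (1 - x / 2) ^ 2 ≤ exp (-x) := by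
  have h := add_one_le_exp (-x / 2)
  calc (1 - x / 2) ^ 2 ≤ exp (-x / 2) ^ 2 := pow_le_pow_left₀ (by linarith) (by linarith) 2
    _ = exp (-x) := by rw [← exp_nat_mul]; ring_nf

lemma phi_le_quartic (t : ℝ) : phi t ≤ (√(2 * π))⁻¹ * (1 - t ^ 2 / 2 + t ^ 4 / 8) := by
  have h := exp_neg_le_one_sub_add_sq_div_two (by positivity : 0 ≤ t ^ 2 / 2)
  rw [phi, neg_div]
  gcongr
  linarith

lemma quartic_le_phi {t : ℝ} (ht : t ^ 2 ≤ 4) : (√(2 * π))⁻¹ * (1 - t ^ 2 / 4) ^ 2 ≤ phi t := by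
  have h := sq_one_sub_half_le_exp_neg (x := t ^ 2 / 2) (by linarith)
  rw [phi, neg_div]
  gcongr
  linarith

lemma integral_phi_le_quintic {z : ℝ} (hz : 0 ≤ z) :
    ∫ t in (0 : ℝ)..z, phi t ≤ (√(2 * π))⁻¹ * (z - z ^ 3 / 6 + z ^ 5 / 40) := by
  have hderiv : ∀ t, HasDerivAt (fun t => (√(2 * π))⁻¹ * (t - t ^ 3 / 6 + t ^ 5 / 40))
      ((√(2 * π))⁻¹ * (1 - t ^ 2 / 2 + t ^ 4 / 8)) t := fun t =>
    (((hasDerivAt_id t).sub ((hasDerivAt_pow 3 t).div_const 6)).add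
      ((hasDerivAt_pow 5 t).div_const 40)).const_mul _ |>.congr_deriv (by ring)
  calc ∫ t in (0 : ℝ)..z, phi t
      ≤ ∫ t in (0 : ℝ)..z, (√(2 * π))⁻¹ * (1 - t ^ 2 / 2 + t ^ 4 / 8) :=
        intervalIntegral.integral_mono_on hz (continuous_phi.intervalIntegrable 0 z)
          ((by fun_prop : Continuous _).intervalIntegrable 0 z) fun t _ => phi_le_quartic t
    _ = _ := by
        rw [intervalIntegral.integral_eq_sub_of_hasDerivAt (fun t _ => hderiv t)
          ((by fun_prop : Continuous _).intervalIntegrable 0 z)]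
        ring

lemma one_third_le_inv_sqrt_two_pi : 1 / 3 ≤ (√(2 * π))⁻¹ := by
  rw [one_div, inv_le_inv₀ (by norm_num) (sqrt_pos.2 two_pi_pos), sqrt_le_left (by norm_num)]
  linarith [pi_le_four]

lemma six_mul_sq_inv_sqrt_two_pi_le : 6 * ((√(2 * π))⁻¹) ^ 2 ≤ 1 := by
  rw [inv_pow, sq_sqrt two_pi_pos.le, ← div_eq_mul_inv, div_le_one two_pi_pos]
  linarith [pi_gt_three]

lemma mills_poly_le_of_le_one {u : ℝ} (hu0 : 0 ≤ u) (hu1 : u ≤ 1) :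
    u * (2 + u) * (1 - u / 6 + u ^ 2 / 40) ^ 2
      + 2 * (1 + u) * (1 - u / 6 + u ^ 2 / 40) * (1 - u / 2 + u ^ 2 / 8) ≤ 3 * (2 + u) / 2 := by
  have h1u : 0 ≤ 1 - u := by linarith
  nlinarith [mul_nonneg hu0 h1u, pow_nonneg hu0 3, pow_nonneg hu0 4, pow_nonneg hu0 5,
    pow_nonneg hu0 6, mul_nonneg (pow_nonneg hu0 5) h1u, mul_nonneg (pow_nonneg hu0 4) h1u,
    mul_nonneg (pow_nonneg hu0 3) h1u, mul_nonneg (pow_nonneg hu0 2) h1u]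

lemma mills_of_taylor_bounds {z J p c : ℝ} (hz : 0 ≤ z) (hz1 : z ≤ 1) (hc : 6 * c ^ 2 ≤ 1)
    (hJ0 : 0 ≤ J) (hJ : J ≤ c * (z - z ^ 3 / 6 + z ^ 5 / 40))
    (hp0 : 0 ≤ p) (hp : p ≤ c * (1 - z ^ 2 / 2 + z ^ 4 / 8)) :
    2 * (1 + z ^ 2) * J * p ≤ z * (2 + z ^ 2) * (1 / 4 - J ^ 2) := by
  have hpoly := mills_poly_le_of_le_one (sq_nonneg z) (by nlinarith)
  have hJ2 : J ^ 2 ≤ (c * (z - z ^ 3 / 6 + z ^ 5 / 40)) ^ 2 := pow_le_pow_left₀ hJ0 hJ 2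
  have hJp : J * p ≤ c * (z - z ^ 3 / 6 + z ^ 5 / 40) * (c * (1 - z ^ 2 / 2 + z ^ 4 / 8)) :=
    mul_le_mul hJ hp hp0 (hJ0.trans hJ)
  have hz2 : 0 ≤ z * (2 + z ^ 2) := by positivity
  nlinarith [mul_le_mul_of_nonneg_left hJ2 hz2, mul_le_mul_of_nonneg_left hc hz2,
    mul_le_mul_of_nonneg_left hJp (by positivity : (0 : ℝ) ≤ 2 * (1 + z ^ 2)),
    mul_nonneg (mul_nonneg (sq_nonneg c) hz) (sub_nonneg.2 hpoly)]

lemma mills_poly_nonneg_of_le_three {u : ℝ} (hu1 : 1 ≤ u) (hu3 : u ≤ 3) :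
    0 ≤ (u - 3) * (u ^ 2 + 6 * u + 3)
      + (u + 5) * (1 / 3 * (1 - u / 4) ^ 2) * (u ^ 3 + 7 * u ^ 2 + 8 * u + 6) := by
  have h3u : 0 ≤ 3 - u := by linarith
  have hu1' : 0 ≤ u - 1 := by linarith
  nlinarith [mul_nonneg hu1' h3u, pow_nonneg hu1' 3, pow_nonneg h3u 3,
    mul_nonneg (pow_nonneg hu1' 2) h3u, mul_nonneg (pow_nonneg h3u 2) hu1']

lemma mills_tail_condition {z : ℝ} (hz : 1 ≤ z) :
    0 ≤ (z ^ 2 - 3) * (z ^ 4 + 6 * z ^ 2 + 3)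
      + (z ^ 3 + 5 * z) * phi z * (z ^ 6 + 7 * z ^ 4 + 8 * z ^ 2 + 6) := by
  have hphi := phi_pos z
  rcases le_total (z ^ 2) 3 with h3 | h3
  · have hphi_ge : 1 / 3 * (1 - z ^ 2 / 4) ^ 2 ≤ phi z :=
      (mul_le_mul_of_nonneg_right one_third_le_inv_sqrt_two_pi (sq_nonneg _)).trans
        (quartic_le_phi (by linarith))
    have hN : z ^ 2 + 5 ≤ z ^ 3 + 5 * z := by nlinarith
    have hpoly := mills_poly_nonneg_of_le_three (u := z ^ 2) (by nlinarith) h3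
    have hprod := mul_le_mul hN hphi_ge (by positivity) (by positivity)
    have hE : 0 ≤ z ^ 6 + 7 * z ^ 4 + 8 * z ^ 2 + 6 := by positivity
    nlinarith [mul_le_mul_of_nonneg_right hprod hE]
  · have : 0 ≤ (z ^ 3 + 5 * z) * phi z * (z ^ 6 + 7 * z ^ 4 + 8 * z ^ 2 + 6) := by positivity
    exact add_nonneg (mul_nonneg (by linarith) (by positivity)) this

lemma mills_of_tail_bound {z p q : ℝ} (hz : 0 ≤ z) (hp : 0 ≤ p) (hq : q ≤ 1 / 2)
    (htail : (z ^ 3 + 5 * z) * p ≤ (z ^ 4 + 6 * z ^ 2 + 3) * q)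
    (hkey : 0 ≤ (z ^ 2 - 3) * (z ^ 4 + 6 * z ^ 2 + 3)
      + (z ^ 3 + 5 * z) * p * (z ^ 6 + 7 * z ^ 4 + 8 * z ^ 2 + 6)) :
    (1 + z ^ 2) * (1 - 2 * q) * p ≤ z * (2 + z ^ 2) * (1 - q) * q := by
  set D := z ^ 4 + 6 * z ^ 2 + 3
  set N := z ^ 3 + 5 * z
  set f : ℝ → ℝ := fun x => z * (2 + z ^ 2) * (1 - x) * x - (1 + z ^ 2) * (1 - 2 * x) * p
  have hD : 0 < D := by positivity
  set L := N * p / D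
  have hLq : L ≤ q := by rwa [div_le_iff₀ hD, mul_comm q]
  have hfL : f L = p / D ^ 2 * ((z ^ 2 - 3) * D + N * p * (z ^ 6 + 7 * z ^ 4 + 8 * z ^ 2 + 6)) := by
    simp only [f, L, D, N]
    field_simp
    ring
  have hf_mono : f q - f L = (q - L) * (z * (2 + z ^ 2) * (1 - q - L) + 2 * (1 + z ^ 2) * p) := by
    simp only [f]; ring
  have hfL_nonneg : 0 ≤ f L := hfL ▸ mul_nonneg (by positivity) hkey
  have hf_le : f L ≤ f q := by
    rw [← sub_nonneg, hf_mono]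
    have : 0 ≤ 1 - q - L := by linarith
    exact mul_nonneg (sub_nonneg.2 hLq) (by positivity)
  have := hfL_nonneg.trans hf_le
  simp only [f] at this
  linarith

theorem mills_type_inequality (z : ℝ) (hz : 0 ≤ z) :
    z * (2 + z ^ 2) * Phi z * (1 - Phi z) ≥ (1 + z ^ 2) * (2 * Phi z - 1) * phi z := by
  rcases le_total z 1 with hz1 | hz1
  · have key := mills_of_taylor_bounds hz hz1 six_mul_sq_inv_sqrt_two_pi_le
      (intervalIntegral.integral_nonneg hz fun t _ => (phi_pos t).le) (integral_phi_le_quintic hz)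
      (phi_pos z).le (phi_le_quartic z)
    rw [Phi_eq_half_add_integral, ge_iff_le]
    convert key using 1 <;> ring
  · have key := mills_of_tail_bound hz (phi_pos z).le (by linarith [half_le_Phi hz])
      (mul_phi_le_mul_one_sub_Phi z) (mills_tail_condition hz1)
    convert key using 1 <;> ring
end

section
/- Let g : [0,∞) → ℝ be continuous, differentiable on (0,∞), with g(0) = 0, g(z) → 0 as z → ∞, and suppose g'(z) ≤ c(z) g(z) for all z > 0, where c(z) = (2+3z²)/(z(2+z²)). Then g(z) ≥ 0 for all z ≥ 0. -/
open Real Set Filter Topology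

/-!
Since `c = u' / u` for `u z = z (2 + z²)`, the inequality `g' ≤ c g` says that `g / u` is
antitone on `(0, ∞)`. If `g z₀ < 0`, then for `z ≥ z₀` we get
`g z ≤ (g z₀ / u z₀) u z ≤ g z₀ < 0`, as `u` is positive and increasing; this contradicts
`g z → 0`.
-/

theorem antitoneOn_div_of_deriv_mul_le {g u : ℝ → ℝ} {a : ℝ}
    (hg : ∀ z ∈ Ioi a, DifferentiableAt ℝ g z) (hu : ∀ z ∈ Ioi a, DifferentiableAt ℝ u z)
    (hu_pos : ∀ z ∈ Ioi a, 0 < u z)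
    (hineq : ∀ z ∈ Ioi a, deriv g z * u z ≤ deriv u z * g z) :
    AntitoneOn (g / u) (Ioi a) := by
  have hdiv : ∀ z ∈ Ioi a, DifferentiableAt ℝ (g / u) z := fun z hz =>
    (hg z hz).div (hu z hz) (hu_pos z hz).ne'
  refine antitoneOn_of_deriv_nonpos (convex_Ioi a)
    (fun z hz => (hdiv z hz).continuousAt.continuousWithinAt) ?_ ?_ <;> rw [interior_Ioi]
  · exact fun z hz => (hdiv z hz).differentiableWithinAt
  · intro z hz
    rw [deriv_div (hg z hz) (hu z hz) (hu_pos z hz).ne']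
    exact div_nonpos_of_nonpos_of_nonneg (by linarith [hineq z hz]) (sq_nonneg _)

theorem nonneg_of_deriv_le_logDeriv_mul {g u : ℝ → ℝ} {a : ℝ}
    (hg : ∀ z ∈ Ioi a, DifferentiableAt ℝ g z) (hu : ∀ z ∈ Ioi a, DifferentiableAt ℝ u z)
    (hu_pos : ∀ z ∈ Ioi a, 0 < u z) (hu_mono : MonotoneOn u (Ioi a))
    (hineq : ∀ z ∈ Ioi a, deriv g z ≤ logDeriv u z * g z)
    (hlim : Tendsto g atTop (𝓝 0)) :
    ∀ z ∈ Ioi a, 0 ≤ g z := by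
  by_contra! ⟨z₀, hz₀, hgz₀⟩
  have hanti : AntitoneOn (g / u) (Ioi a) := by
    refine antitoneOn_div_of_deriv_mul_le hg hu hu_pos fun z hz => ?_
    have h := mul_le_mul_of_nonneg_right (hineq z hz) (hu_pos z hz).le
    rwa [logDeriv_apply, div_mul_eq_mul_div, div_mul_eq_mul_div, mul_div_cancel_right₀ _
      (hu_pos z hz).ne'] at h
  have hbound : ∀ z ≥ z₀, g z ≤ g z₀ := fun z hz => by
    have hz' : z ∈ Ioi a := lt_of_lt_of_le hz₀ hz
    have hquot : g z / u z ≤ g z₀ / u z₀ := hanti hz₀ hz' hz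
    have hquot_neg : g z₀ / u z₀ < 0 := div_neg_of_neg_of_pos hgz₀ (hu_pos z₀ hz₀)
    calc g z = g z / u z * u z := (div_mul_cancel₀ _ (hu_pos z hz').ne').symm
      _ ≤ g z₀ / u z₀ * u z := mul_le_mul_of_nonneg_right hquot (hu_pos z hz').le
      _ ≤ g z₀ / u z₀ * u z₀ := mul_le_mul_of_nonpos_left (hu_mono hz₀ hz' hz) hquot_neg.le
      _ = g z₀ := div_mul_cancel₀ _ (hu_pos z₀ hz₀).ne'
  obtain ⟨z, hgz, hz⟩ :=
    ((hlim.eventually (eventually_gt_nhds hgz₀)).and (eventually_ge_atTop z₀)).exists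
  exact (hbound z hz).not_gt hgz

theorem ode_comparison_general (g : ℝ → ℝ)
    (hdiff : ∀ z > (0 : ℝ), DifferentiableAt ℝ g z)
    (h0 : g 0 = 0)
    (hlim : Filter.Tendsto g Filter.atTop (𝓝 0))
    (hineq : ∀ z > (0 : ℝ), deriv g z ≤ ((2 + 3 * z ^ 2) / (z * (2 + z ^ 2))) * g z) :
    ∀ z ≥ (0 : ℝ), 0 ≤ g z := by
  have hu : ∀ z : ℝ, HasDerivAt (fun z => z * (2 + z ^ 2)) (2 + 3 * z ^ 2) z := fun z =>
    ((hasDerivAt_id' z).mul ((hasDerivAt_pow 2 z).const_add 2)).congr_deriv (by ring)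
  have hu_mono : MonotoneOn (fun z : ℝ => z * (2 + z ^ 2)) (Ioi 0) := fun x hx y _ hxy => by
    dsimp only
    nlinarith [pow_le_pow_left₀ (le_of_lt hx) hxy 3]
  intro z hz
  rcases hz.eq_or_lt with rfl | hz
  · exact h0.ge
  refine nonneg_of_deriv_le_logDeriv_mul hdiff (fun z _ => (hu z).differentiableAt)
    (fun z (hz : 0 < z) => by positivity) hu_mono (fun z hz => ?_) hlim z hz
  rw [logDeriv_apply, (hu z).deriv]
  exact hineq z hz

theorem ode_comparison (g : ℝ → ℝ)
    (hcont : ContinuousOn g (Set.Ici 0))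
    (hdiff : ∀ z > (0 : ℝ), DifferentiableAt ℝ g z)
    (h0 : g 0 = 0)
    (hlim : Filter.Tendsto g Filter.atTop (𝓝 0))
    (hineq : ∀ z > (0 : ℝ), deriv g z ≤ ((2 + 3 * z ^ 2) / (z * (2 + z ^ 2))) * g z) :
    ∀ z ≥ (0 : ℝ), 0 ≤ g z :=
  ode_comparison_general g hdiff h0 hlim hineq
end

section
/- For 0 < β ≤ α < 1/2, defining ω(α,β) = (1/2)(α ln(α/(1-β)) + (1-α) ln((1-α)/β)), one has ω(α,β) ≥ ω(β,α); equivalently, max{ω(α,β), ω(β,α)} = ω(max{α,β}, min{α,β}). -/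
open Real Set Filter Topology

noncomputable def omega (α β : ℝ) : ℝ :=
  1 / 2 * (α * Real.log (α / (1 - β)) + (1 - α) * Real.log ((1 - α) / β))

/-!
Fix `a ≤ 1/2`. The function `g x = ω(a, x) - ω(x, a)` vanishes at `x = a`, so it suffices that
`g` is nonincreasing on `(0, a]`. Up to the factor `1/2`, its derivative is
`ℓ(x) + ℓ(a) - (1 - a - x) / (x (1 - x))` with `ℓ(t) = log ((1 - t) / t)`. Applying
`log s ≤ sinh (log s) = (s - s⁻¹) / 2` at `s = (1 - t) / t ≥ 1` gives
`ℓ(t) ≤ (1 - 2t) / (2 t (1 - t))`, and since `t (1 - t)` increases on `(0, 1/2]`, both bounds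
may be taken with the denominator at `x`; they then add up to exactly `(1 - a - x) / (x (1 - x))`.
-/

lemma log_le_sub_inv_div_two {t : ℝ} (ht : 1 ≤ t) : log t ≤ (t - t⁻¹) / 2 :=
  sinh_log (by linarith) ▸ self_le_sinh_iff.mpr (log_nonneg ht)

lemma log_one_sub_div_self_le {x : ℝ} (hx0 : 0 < x) (hx : x ≤ 1 / 2) :
    log ((1 - x) / x) ≤ (1 - 2 * x) / (2 * (x * (1 - x))) := by
  have hx1 : 1 - x ≠ 0 := by linarith
  calc log ((1 - x) / x) ≤ ((1 - x) / x - ((1 - x) / x)⁻¹) / 2 :=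
        log_le_sub_inv_div_two ((one_le_div hx0).mpr (by linarith))
    _ = (1 - 2 * x) / (2 * (x * (1 - x))) := by field_simp; ring

lemma log_one_sub_div_self_add_le {x a : ℝ} (hx0 : 0 < x) (hxa : x ≤ a) (ha : a ≤ 1 / 2) :
    log ((1 - x) / x) + log ((1 - a) / a) ≤ (1 - a - x) / (x * (1 - x)) := by
  have hx1 : 0 < 1 - x := by linarith
  have hxa' : x * (1 - x) ≤ a * (1 - a) := by nlinarith
  have hA : log ((1 - a) / a) ≤ (1 - 2 * a) / (2 * (x * (1 - x))) :=
    (log_one_sub_div_self_le (hx0.trans_le hxa) ha).trans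
      (div_le_div_of_nonneg_left (by linarith) (by positivity) (by linarith))
  calc log ((1 - x) / x) + log ((1 - a) / a)
      ≤ (1 - 2 * x) / (2 * (x * (1 - x))) + (1 - 2 * a) / (2 * (x * (1 - x))) :=
        add_le_add (log_one_sub_div_self_le hx0 (hxa.trans ha)) hA
    _ = (1 - a - x) / (x * (1 - x)) := by field_simp; ring

lemma hasDerivAt_omega_left {a b : ℝ} (ha0 : 0 < a) (ha1 : a < 1) (hb0 : 0 < b) (hb1 : b < 1) :
    HasDerivAt (fun x => omega x b) ((log (a / (1 - b)) - log ((1 - a) / b)) / 2) a := by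
  have hx : HasDerivAt (fun x : ℝ => x) 1 a := hasDerivAt_id' a
  have h1 := (hx.div_const (1 - b)).log (div_ne_zero ha0.ne' (by linarith))
  have h2 := ((hx.const_sub 1).div_const b).log (div_ne_zero (by linarith) hb0.ne')
  have : 1 - a ≠ 0 := by linarith
  have : 1 - b ≠ 0 := by linarith
  exact (((hx.mul h1).add ((hx.const_sub 1).mul h2)).const_mul (1 / 2)).congr_deriv
    (by field_simp; ring)

lemma hasDerivAt_omega_right {a b : ℝ} (ha0 : 0 < a) (ha1 : a < 1) (hb0 : 0 < b) (hb1 : b < 1) :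
    HasDerivAt (fun y => omega a y) ((a / (1 - b) - (1 - a) / b) / 2) b := by
  have hy : HasDerivAt (fun y : ℝ => y) 1 b := hasDerivAt_id' b
  have h1 := ((hasDerivAt_const b a).div (hy.const_sub 1) (by linarith)).log
    (div_ne_zero ha0.ne' (by linarith))
  have h2 := ((hasDerivAt_const b (1 - a)).div hy hb0.ne').log
    (div_ne_zero (by linarith) hb0.ne')
  have : 1 - a ≠ 0 := by linarith
  have : 1 - b ≠ 0 := by linarith
  exact (((h1.const_mul a).add (h2.const_mul (1 - a))).const_mul (1 / 2)).congr_deriv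
    (by simp only [Pi.div_apply]; field_simp; ring)

lemma antitoneOn_omega_sub_omega_swap {a : ℝ} (ha : a ≤ 1 / 2) :
    AntitoneOn (fun x => omega a x - omega x a) (Ioc 0 a) := by
  have hderiv : ∀ x ∈ Ioc 0 a, HasDerivAt (fun x => omega a x - omega x a)
      (((a / (1 - x) - (1 - a) / x) - (log (x / (1 - a)) - log ((1 - x) / a))) / 2) x :=
    fun x ⟨hx0, hxa⟩ => by
      have ha0 := hx0.trans_le hxa
      exact ((hasDerivAt_omega_right ha0 (by linarith) hx0 (by linarith)).sub
        (hasDerivAt_omega_left hx0 (by linarith) ha0 (by linarith))).congr_deriv (by ring)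
  refine antitoneOn_of_deriv_nonpos (convex_Ioc 0 a)
    (fun x hx => (hderiv x hx).continuousAt.continuousWithinAt)
    (fun x hx => (hderiv x (interior_subset hx)).differentiableAt.differentiableWithinAt)
    fun x hx => ?_
  rw [interior_Ioc] at hx
  obtain ⟨hx0, hxa⟩ := hx
  have ha0 := hx0.trans hxa
  have hx1 : 1 - x ≠ 0 := by linarith
  have ha1 : 1 - a ≠ 0 := by linarith
  have hlog : log ((1 - x) / a) - log (x / (1 - a)) = log ((1 - x) / x) + log ((1 - a) / a) := by
    rw [← log_div (by positivity) (by positivity), ← log_mul (by positivity) (by positivity)]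
    congr 1; field_simp
  have hrat : a / (1 - x) - (1 - a) / x = -((1 - a - x) / (x * (1 - x))) := by
    field_simp; ring
  rw [(hderiv x ⟨hx0, hxa.le⟩).deriv]
  linarith [log_one_sub_div_self_add_le hx0 hxa.le ha]

theorem omega_max (α β : ℝ) (hβ : 0 < β) (hβα : β ≤ α) (hα : α < 1 / 2) :
    omega α β ≥ omega β α ∧
      max (omega α β) (omega β α) = omega (max α β) (min α β) := by
  have hge : omega β α ≤ omega α β := by
    have := antitoneOn_omega_sub_omega_swap hα.le ⟨hβ, hβα⟩ ⟨hβ.trans_le hβα, le_rfl⟩ hβα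
    simpa using this
  exact ⟨hge, by rw [max_eq_left hβα, min_eq_right hβα, max_eq_left hge]⟩
end

section
/- For fixed β ∈ (0,1/2), the function g(α) = (1+α-β) ln(α/(1-β)) + (1-α+β) ln((1-α)/β) is concave on [β, 1/2], satisfies g(β) = 0 and g(1/2) ≥ 0, and hence g(α) ≥ 0 for all α ∈ [β, 1/2]. -/
open Real Set Filter Topology

/-- Key scalar inequality: `log x ≤ sinh (log x)` for `x ≥ 1`. -/
lemma log_le_half_sub_inv {x : ℝ} (hx : 1 ≤ x) : Real.log x ≤ (x - x⁻¹) / 2 := by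
  have hx0 : (0:ℝ) < x := lt_of_lt_of_le one_pos hx
  have h1 : Real.log x ≤ Real.sinh (Real.log x) :=
    Real.self_le_sinh_iff.2 (Real.log_nonneg hx)
  rwa [Real.sinh_log hx0] at h1

theorem g_concave_nonneg (β : ℝ) (hβ : β ∈ Set.Ioo (0 : ℝ) (1 / 2)) :
    ConcaveOn ℝ (Set.Icc β (1 / 2))
        (fun α : ℝ => (1 + α - β) * Real.log (α / (1 - β)) + (1 - α + β) * Real.log ((1 - α) / β))
      ∧ (1 + β - β) * Real.log (β / (1 - β)) + (1 - β + β) * Real.log ((1 - β) / β) = 0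
      ∧ (1 + 1 / 2 - β) * Real.log ((1 / 2) / (1 - β)) + (1 - 1 / 2 + β) * Real.log ((1 - 1 / 2) / β) ≥ 0
      ∧ ∀ α ∈ Set.Icc β (1 / 2),
          (1 + α - β) * Real.log (α / (1 - β)) + (1 - α + β) * Real.log ((1 - α) / β) ≥ 0 := by
  obtain ⟨hβ0, hβ2⟩ := hβ
  have hβ1 : β < 1 := by linarith
  have h1β : (0:ℝ) < 1 - β := by linarith
  have hβne : β ≠ 0 := ne_of_gt hβ0
  have h1βne : (1:ℝ) - β ≠ 0 := ne_of_gt h1β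
  -- Part 2 : value at β
  have part2 : (1 + β - β) * Real.log (β / (1 - β)) + (1 - β + β) * Real.log ((1 - β) / β) = 0 := by
    rw [Real.log_div hβne h1βne, Real.log_div h1βne hβne]; ring
  -- Part 3 : value at 1/2 is nonneg
  have part3 : (1 + 1 / 2 - β) * Real.log ((1 / 2) / (1 - β))
      + (1 - 1 / 2 + β) * Real.log ((1 - 1 / 2) / β) ≥ 0 := by
    set F : ℝ → ℝ := fun b => (3/2 - b) * (Real.log (1/2) - Real.log (1 - b))
        + (1/2 + b) * (Real.log (1/2) - Real.log b) with hF
    have hder : ∀ b ∈ Set.Icc β (1/2:ℝ), HasDerivAt F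
        ((-1) * (Real.log (1/2) - Real.log (1 - b)) + (3/2 - b) * -((1 - b)⁻¹ * (-1))
          + (1 * (Real.log (1/2) - Real.log b) + (1/2 + b) * -b⁻¹)) b := by
      intro b hb
      have hb0 : (0:ℝ) < b := lt_of_lt_of_le hβ0 hb.1
      have hb1 : (0:ℝ) < 1 - b := by have := hb.2; linarith
      have hlb : HasDerivAt (fun t : ℝ => Real.log (1 - t)) ((1 - b)⁻¹ * (-1)) b :=
        (Real.hasDerivAt_log hb1.ne').comp b ((hasDerivAt_id b).const_sub 1)
      exact (((hasDerivAt_id b).const_sub (3/2)).mul (hlb.const_sub (Real.log (1/2)))).add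
        (((hasDerivAt_id b).const_add (1/2)).mul ((Real.hasDerivAt_log hb0.ne').const_sub
          (Real.log (1/2))))
    have hanti : AntitoneOn F (Set.Icc β (1/2)) := by
      apply antitoneOn_of_hasDerivWithinAt_nonpos (convex_Icc _ _)
        (fun b hb => (hder b hb).continuousAt.continuousWithinAt)
        (fun b hb => ((hder b (interior_subset hb)).hasDerivWithinAt))
      intro b hb
      rw [interior_Icc] at hb
      have hb0 : (0:ℝ) < b := lt_of_lt_of_le hβ0 hb.1.le
      have hb2 : b < 1/2 := hb.2
      have hb1 : (0:ℝ) < 1 - b := by linarith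
      have hx1 : (1:ℝ) ≤ (1 - b) / b := (one_le_div hb0).2 (by linarith)
      have hkey := log_le_half_sub_inv hx1
      rw [Real.log_div hb1.ne' hb0.ne'] at hkey
      have hrw : ((1 - b) / b - ((1 - b) / b)⁻¹) / 2
          = (1/2 + b) / b - (3/2 - b) / (1 - b) := by
        rw [inv_div]; field_simp; ring
      rw [hrw] at hkey
      have : (-1) * (Real.log (1/2) - Real.log (1 - b)) + (3/2 - b) * -((1 - b)⁻¹ * (-1))
          + (1 * (Real.log (1/2) - Real.log b) + (1/2 + b) * -b⁻¹)
          = (Real.log (1 - b) - Real.log b) - ((1/2 + b) / b - (3/2 - b) / (1 - b)) := by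
        field_simp
        ring
      rw [this]
      linarith
    have hF12 : F (1/2) = 0 := by rw [hF]; norm_num
    have hFβ : F β ≥ 0 := by
      have := hanti (Set.left_mem_Icc.2 (by linarith)) (Set.right_mem_Icc.2 (by linarith)) hβ2.le
      rw [hF12] at this; linarith
    have : (1 + 1 / 2 - β) * Real.log ((1 / 2) / (1 - β))
        + (1 - 1 / 2 + β) * Real.log ((1 - 1 / 2) / β) = F β := by
      rw [hF]
      rw [show (1:ℝ) - 1/2 = 1/2 by norm_num, Real.log_div (by norm_num) h1βne,
        Real.log_div (by norm_num) hβne]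
      ring
    linarith [this ▸ hFβ]
  -- Part 1 : concavity
  have part1 : ConcaveOn ℝ (Set.Icc β (1 / 2))
      (fun α : ℝ => (1 + α - β) * Real.log (α / (1 - β))
        + (1 - α + β) * Real.log ((1 - α) / β)) := by
    set g : ℝ → ℝ := fun α => (1 + α - β) * Real.log (α / (1 - β))
        + (1 - α + β) * Real.log ((1 - α) / β) with hg
    set g' : ℝ → ℝ := fun a => Real.log a - Real.log (1 - a) - Real.log (1 - β) + Real.log β
        + (1 + a - β) / a - (1 - a + β) / (1 - a) with hg'
    have hOpen : IsOpen (Set.Ioo (0:ℝ) 1) := isOpen_Ioo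
    have hsub : Set.Icc β (1/2:ℝ) ⊆ Set.Ioo (0:ℝ) 1 := fun x hx =>
      ⟨lt_of_lt_of_le hβ0 hx.1, by have := hx.2; linarith⟩
    -- g agrees with its expanded form on Ioo 0 1
    have hEq : Set.EqOn g (fun a => (1 + a - β) * (Real.log a - Real.log (1 - β))
        + (1 - a + β) * (Real.log (1 - a) - Real.log β)) (Set.Ioo (0:ℝ) 1) := by
      intro a ha
      have ha1 : (0:ℝ) < 1 - a := by have := ha.2; linarith
      simp only [hg, Real.log_div ha.1.ne' h1βne, Real.log_div ha1.ne' hβne]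
    have hder1 : ∀ a ∈ Set.Ioo (0:ℝ) 1, HasDerivAt g (g' a) a := by
      intro a ha
      have ha0 := ha.1
      have ha1 : (0:ℝ) < 1 - a := by have := ha.2; linarith
      have hlb : HasDerivAt (fun t : ℝ => Real.log (1 - t)) ((1 - a)⁻¹ * (-1)) a :=
        (Real.hasDerivAt_log ha1.ne').comp a ((hasDerivAt_id a).const_sub 1)
      have h1 : HasDerivAt (fun t : ℝ => (1 + t - β) * (Real.log t - Real.log (1 - β))
          + (1 - t + β) * (Real.log (1 - t) - Real.log β))
          (1 * (Real.log a - Real.log (1 - β)) + (1 + a - β) * a⁻¹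
            + ((-1) * (Real.log (1 - a) - Real.log β) + (1 - a + β) * ((1 - a)⁻¹ * (-1)))) a :=
        ((((hasDerivAt_id a).const_add 1).sub_const β).mul
            ((Real.hasDerivAt_log ha0.ne').sub_const (Real.log (1 - β)))).add
          ((((hasDerivAt_id a).const_sub 1).add_const β).mul (hlb.sub_const (Real.log β)))
      have h2 : HasDerivAt g (1 * (Real.log a - Real.log (1 - β)) + (1 + a - β) * a⁻¹
            + ((-1) * (Real.log (1 - a) - Real.log β) + (1 - a + β) * ((1 - a)⁻¹ * (-1)))) a :=
        h1.congr_of_eventuallyEq (Filter.eventuallyEq_of_mem (hOpen.mem_nhds ha) hEq)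
      convert h2 using 1
      rw [hg']
      field_simp
      ring
    have hder2 : ∀ a ∈ Set.Ioo (0:ℝ) 1, HasDerivAt g'
        ((a - (1 - β)) / a^2 + (1 - a - β) / (1 - a)^2) a := by
      intro a ha
      have ha0 := ha.1
      have ha1 : (0:ℝ) < 1 - a := by have := ha.2; linarith
      have hlb : HasDerivAt (fun t : ℝ => Real.log (1 - t)) ((1 - a)⁻¹ * (-1)) a :=
        (Real.hasDerivAt_log ha1.ne').comp a ((hasDerivAt_id a).const_sub 1)
      have hd1 : HasDerivAt (fun t : ℝ => (1 + t - β) / t)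
          ((1 * a - (1 + a - β) * 1) / a^2) a :=
        (((hasDerivAt_id a).const_add 1).sub_const β).div (hasDerivAt_id a) ha0.ne'
      have hd2 : HasDerivAt (fun t : ℝ => (1 - t + β) / (1 - t))
          (((-1) * (1 - a) - (1 - a + β) * (-1)) / (1 - a)^2) a :=
        ((((hasDerivAt_id a).const_sub 1).add_const β)).div
          ((hasDerivAt_id a).const_sub 1) ha1.ne'
      have h1 : HasDerivAt g' (a⁻¹ - (1 - a)⁻¹ * (-1)
          + (1 * a - (1 + a - β) * 1) / a^2
          - ((-1) * (1 - a) - (1 - a + β) * (-1)) / (1 - a)^2) a :=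
        (((((Real.hasDerivAt_log ha0.ne').sub hlb).sub_const
          (Real.log (1 - β))).add_const (Real.log β)).add hd1).sub hd2
      convert h1 using 1
      field_simp
      ring
    apply concaveOn_of_hasDerivWithinAt2_nonpos (convex_Icc _ _)
      (f' := g') (f'' := fun a => (a - (1 - β)) / a^2 + (1 - a - β) / (1 - a)^2)
    · exact fun a ha => (hder1 a (hsub ha)).continuousAt.continuousWithinAt
    · intro a ha
      rw [interior_Icc] at ha
      exact (hder1 a (hsub ⟨ha.1.le, ha.2.le⟩)).hasDerivWithinAt
    · intro a ha
      rw [interior_Icc] at ha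
      exact (hder2 a (hsub ⟨ha.1.le, ha.2.le⟩)).hasDerivWithinAt
    · intro a ha
      rw [interior_Icc] at ha
      have ha0 : (0:ℝ) < a := lt_of_lt_of_le hβ0 ha.1.le
      have ha2 : a < 1/2 := ha.2
      have ha1 : (0:ℝ) < 1 - a := by linarith
      have hkey : (a - (1 - β)) / a^2 + (1 - a - β) / (1 - a)^2
          = ((1 - a - β) * (a^2 - (1 - a)^2)) / (a^2 * (1 - a)^2) := by
        field_simp
        ring
      rw [hkey]
      apply div_nonpos_of_nonpos_of_nonneg
      · nlinarith
      · positivity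
  refine ⟨part1, part2, part3, ?_⟩
  intro α hα
  have h0 : min ((fun α : ℝ => (1 + α - β) * Real.log (α / (1 - β))
      + (1 - α + β) * Real.log ((1 - α) / β)) β)
      ((fun α : ℝ => (1 + α - β) * Real.log (α / (1 - β))
      + (1 - α + β) * Real.log ((1 - α) / β)) (1/2)) ≤
      (fun α : ℝ => (1 + α - β) * Real.log (α / (1 - β))
      + (1 - α + β) * Real.log ((1 - α) / β)) α :=
    part1.min_le_of_mem_Icc (Set.left_mem_Icc.2 (by linarith))
      (Set.right_mem_Icc.2 (by linarith)) hα
  simp only at h0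
  rw [part2] at h0
  exact le_trans (le_min le_rfl part3) h0
end
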